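/- Let Ω be a countably infinite set and let u, v, f ∈ Ω^Ω. If k(u) = k(f) = ∞, c(v) = ∞, and d(v) = 0, then f belongs to the subsemigroup of Ω^Ω generated by S_{1,2,3,4,5} ∪ {u, v}. -/

import Mathlib

/-!
Setting: `Ω` is a countably infinite set, `Function.End Ω = Ω → Ω` is the full
transformation semigroup (a subset is closed under composition in one order iff
it is closed in the other, so the lattice of subsemigroups is unaffected by the
left-to-right convention of the paper).
-/

open Cardinal

/-- A transversal of `f`: a set on which `f` is injective and whose image is all of `Ωf`. -/
def IsTransversal {Ω : Type*} (f : Ω → Ω) (T : Set Ω) : Prop :=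
  Set.InjOn f T ∧ f '' T = Set.range f

/-- The defect `d(f) = |Ω \ Ωf|`. -/
noncomputable def defect {Ω : Type*} (f : Ω → Ω) : Cardinal :=
  #((Set.range f)ᶜ : Set Ω)

/-- The collapse `c(f) = |Ω \ Σ|` for a transversal `Σ` of `f` (the value is
independent of the choice of transversal, so the infimum is the common value). -/
noncomputable def collapse {Ω : Type*} (f : Ω → Ω) : Cardinal :=
  ⨅ T : {T : Set Ω // IsTransversal f T}, #(T.1ᶜ : Set Ω)

/-- The infinite contraction index `k(f) = |{α : αf⁻¹ infinite}|`. -/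
noncomputable def contract {Ω : Type*} (f : Ω → Ω) : Cardinal :=
  #({α : Ω | (f ⁻¹' {α}).Infinite} : Set Ω)

def S1 {Ω : Type*} : Set (Function.End Ω) := {f | collapse f = 0 ∨ 0 < defect f}
def S2 {Ω : Type*} : Set (Function.End Ω) := {f | 0 < collapse f ∨ defect f = 0}
def S3 {Ω : Type*} : Set (Function.End Ω) := {f | collapse f < ℵ₀ ∨ ℵ₀ ≤ defect f}
def S4 {Ω : Type*} : Set (Function.End Ω) := {f | ℵ₀ ≤ collapse f ∨ defect f < ℵ₀}
def S5 {Ω : Type*} : Set (Function.End Ω) := {f | contract f < ℵ₀}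

/-- `Sym(Ω)`, the bijections of `Ω`. -/
def SymOmega {Ω : Type*} : Set (Function.End Ω) := {f | Function.Bijective f}

/-- `U = {f : d(f) = ∞ or 0 < c(f) < ∞} ∪ Sym(Ω)`. -/
def SetU {Ω : Type*} : Set (Function.End Ω) :=
  {f | ℵ₀ ≤ defect f ∨ (0 < collapse f ∧ collapse f < ℵ₀)} ∪ SymOmega

/-- `V = {f : c(f) = ∞ or 0 < d(f) < ∞} ∪ Sym(Ω)`. -/
def SetV {Ω : Type*} : Set (Function.End Ω) :=
  {f | ℵ₀ ≤ collapse f ∨ (0 < defect f ∧ defect f < ℵ₀)} ∪ SymOmega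

/-- `S_{1,2,3,4,5}`. -/
def S12345 {Ω : Type*} : Set (Function.End Ω) := S1 ∩ S2 ∩ S3 ∩ S4 ∩ S5

/-- The family `S_1, …, S_5` indexed by `Fin 5`. -/
def SS {Ω : Type*} : Fin 5 → Set (Function.End Ω) := ![S1, S2, S3, S4, S5]


/-!
As `d(v) = 0`, `v` has a section `s`; its image is a transversal of `v`, so `s` is injective
with `d(s) ≥ c(v) = ∞`. Choose an injection `φ` onto points with infinite `u`-fibres, leaving
infinitely many such points outside its image, and factor `f = v ∘ m ∘ u ∘ a`: `a` sends `w`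
into the fibre `u⁻¹(φ (f w))`, injectively except on one infinite fibre of `f`, which it
collapses; `m` sends `φ q` to `s q` and everything else to a single point. Each of `a`, `m` has
infinite defect, infinite collapse and at most one infinite fibre, hence lies in `S_{1,2,3,4,5}`.
-/

open Function Set

section Transformations

variable {Ω : Type*}

theorem exists_isTransversal (g : Ω → Ω) : ∃ T, IsTransversal g T := by
  obtain ⟨T, hT, hinj⟩ := exists_image_eq_and_injOn univ g
  exact ⟨T, hinj, hT.trans image_univ⟩

theorem collapse_le_mk_compl {g : Ω → Ω} {T : Set Ω} (hT : IsTransversal g T) :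
    collapse g ≤ #(Tᶜ : Set Ω) :=
  ciInf_le' _ (⟨T, hT⟩ : {T : Set Ω // IsTransversal g T})

theorem le_collapse_of_forall {g : Ω → Ω} {κ : Cardinal}
    (h : ∀ T, IsTransversal g T → κ ≤ #(Tᶜ : Set Ω)) : κ ≤ collapse g := by
  obtain ⟨T, hT⟩ := exists_isTransversal g
  have : Nonempty {T : Set Ω // IsTransversal g T} := ⟨⟨T, hT⟩⟩
  exact le_ciInf fun T => h T.1 T.2

theorem isTransversal_range_of_leftInverse {v s : Ω → Ω} (h : LeftInverse v s) :
    IsTransversal v (range s) := by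
  refine ⟨?_, ?_⟩
  · rintro _ ⟨a, rfl⟩ _ ⟨b, rfl⟩ hab
    exact congrArg s ((h a).symm.trans (hab.trans (h b)))
  · rw [← range_comp, h.comp_eq_id, range_id, h.surjective.range_eq]

theorem collapse_le_defect_of_leftInverse {v s : Ω → Ω} (h : LeftInverse v s) :
    collapse v ≤ defect s :=
  collapse_le_mk_compl (isTransversal_range_of_leftInverse h)

theorem aleph0_le_collapse_of_infinite_fiber {g : Ω → Ω} {c : Ω}
    (h : (g ⁻¹' {c}).Infinite) : ℵ₀ ≤ collapse g := by
  refine le_collapse_of_forall fun T hT => ?_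
  have hsub : (g ⁻¹' {c} ∩ T).Subsingleton := fun x hx y hy =>
    hT.1 hx.2 hy.2 (hx.1.trans hy.1.symm)
  have hcompl : (g ⁻¹' {c} \ (g ⁻¹' {c} ∩ T)) ⊆ Tᶜ := fun x hx hxT => hx.2 ⟨hx.1, hxT⟩
  exact infinite_iff.mp ((h.sdiff hsub.finite).mono hcompl).to_subtype

theorem contract_lt_aleph0_of_injOn_compl {g : Ω → Ω} {S : Set Ω} {c : Ω}
    (hconst : ∀ w ∈ S, g w = c) (hinj : InjOn g Sᶜ) : contract g < ℵ₀ := by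
  have hsub : {q | (g ⁻¹' {q}).Infinite} ⊆ {c} := by
    intro q hq
    by_contra hqc
    refine hq (Subsingleton.finite fun x hx y hy => hinj ?_ ?_ (hx.trans hy.symm))
    · exact fun hxS => hqc ((hconst x hxS).symm.trans hx).symm
    · exact fun hyS => hqc ((hconst y hyS).symm.trans hy).symm
  exact (mk_le_mk_of_subset hsub).trans_lt (mk_singleton c ▸ one_lt_aleph0)

theorem surjective_of_defect_eq_zero {g : Ω → Ω} (h : defect g = 0) : Surjective g :=
  range_eq_univ.mp (compl_empty_iff.mp (mk_set_eq_zero_iff.mp h))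

theorem infinite_setOf_infinite_fiber {g : Ω → Ω} (h : ℵ₀ ≤ contract g) :
    {q | (g ⁻¹' {q}).Infinite}.Infinite :=
  infinite_coe_iff.mp (infinite_iff.mpr h)

theorem Set.Infinite.exists_injective_forall_mem {K : Set Ω} (hK : K.Infinite)
    (α : Type*) [Countable α] : ∃ ψ : α → Ω, Injective ψ ∧ ∀ x, ψ x ∈ K := by
  obtain ⟨j, hj⟩ := Countable.exists_injective_nat α
  refine ⟨fun x => hK.natEmbedding _ (j x), fun x y hxy => hj ?_, fun x => (hK.natEmbedding _ _).2⟩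
  exact (hK.natEmbedding _).injective (Subtype.ext hxy)

theorem mem_S12345_of_aleph0_le {g : Function.End Ω} (hd : ℵ₀ ≤ defect g)
    (hc : ℵ₀ ≤ collapse g) (hk : contract g < ℵ₀) : g ∈ S12345 :=
  ⟨⟨⟨⟨.inr (aleph0_pos.trans_le hd), .inl (aleph0_pos.trans_le hc)⟩, .inr hd⟩, .inl hc⟩, hk⟩

theorem mem_S12345_of_injOn_compl {g : Function.End Ω} {S : Set Ω} {c : Ω} (hS : S.Infinite)
    (hconst : ∀ w ∈ S, g w = c) (hinj : InjOn g Sᶜ) (hd : ℵ₀ ≤ defect g) : g ∈ S12345 :=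
  mem_S12345_of_aleph0_le hd (aleph0_le_collapse_of_infinite_fiber (hS.mono hconst))
    (contract_lt_aleph0_of_injOn_compl hconst hinj)

theorem exists_mem_S12345_comp_eq {φ s : Ω → Ω} (hφ : Injective φ) (hφc : (range φ)ᶜ.Infinite)
    (hs : Injective s) (hds : ℵ₀ ≤ defect s) :
    ∃ m ∈ (S12345 : Set (Function.End Ω)), ∀ q, m (φ q) = s q := by
  classical
  obtain ⟨w₀, -⟩ := hφc.nonempty
  refine ⟨extend φ s (fun _ => s w₀), mem_S12345_of_injOn_compl hφc (c := s w₀) ?_ ?_ ?_,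
    hφ.extend_apply s _⟩
  · exact fun w hw => extend_apply' _ _ w hw
  · rw [compl_compl]
    rintro _ ⟨x, rfl⟩ _ ⟨y, rfl⟩ hxy
    rw [hφ.extend_apply, hφ.extend_apply] at hxy
    rw [hs hxy]
  · refine hds.trans (mk_le_mk_of_subset (compl_subset_compl.mpr ?_))
    rintro _ ⟨w, rfl⟩
    rw [extend_def]
    split_ifs <;> exact mem_range_self _

theorem exists_mem_S12345_comp_eq_comp [Countable Ω] {u f φ : Ω → Ω} (hφ : Injective φ)
    (hu : ∀ q, (u ⁻¹' {φ q}).Infinite) {p : Ω} (hp : p ∉ range φ) (hup : (u ⁻¹' {p}).Infinite)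
    {γ : Ω} (hf : (f ⁻¹' {γ}).Infinite) :
    ∃ a ∈ (S12345 : Set (Function.End Ω)), ∀ w, u (a w) = φ (f w) := by
  classical
  choose E hE hEu using fun q => (hu q).exists_injective_forall_mem Ω
  set a : Function.End Ω := fun w => E (f w) (if f w = γ then γ else w) with ha
  have hua : ∀ w, u (a w) = φ (f w) := fun w => hEu _ _
  refine ⟨a, mem_S12345_of_injOn_compl hf (c := E γ γ) ?_ ?_ ?_, hua⟩
  · intro w (hw : f w = γ)
    simp only [ha, hw, if_pos]
  · intro x (hx : f x ≠ γ) y (hy : f y ≠ γ) hxy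
    have hfxy : f x = f y := hφ ((hua x).symm.trans ((congrArg u hxy).trans (hua y)))
    simp only [ha, hfxy, if_neg hy] at hxy
    exact hE _ hxy
  · have hsub : u ⁻¹' {p} ⊆ (range a)ᶜ := by
      rintro _ (hw : u _ = p) ⟨x, rfl⟩
      exact hp ⟨f x, (hua x).symm.trans hw⟩
    exact (infinite_iff.mp hup.to_subtype).trans (mk_le_mk_of_subset hsub)

end Transformations

theorem stmt13_general (Ω : Type) [Countable Ω] (u v f : Function.End Ω)
    (hku : ℵ₀ ≤ contract u) (hkf : ℵ₀ ≤ contract f)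
    (hcv : ℵ₀ ≤ collapse v) (hdv : defect v = 0) :
    f ∈ Subsemigroup.closure (S12345 ∪ {u, v}) := by
  obtain ⟨s, hvs⟩ := (surjective_of_defect_eq_zero hdv).hasRightInverse
  obtain ⟨γ, hγ⟩ := (infinite_setOf_infinite_fiber hkf).nonempty
  obtain ⟨ψ, hψ, hψu⟩ :=
    (infinite_setOf_infinite_fiber hku).exists_injective_forall_mem (Ω ⊕ ℕ)
  have hφ : Injective (ψ ∘ Sum.inl) := hψ.comp Sum.inl_injective
  have hψφ : ∀ n, ψ (.inr n) ∉ range (ψ ∘ Sum.inl) := fun n ⟨q, hq⟩ => Sum.inl_ne_inr (hψ hq)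
  obtain ⟨a, ha, hua⟩ := exists_mem_S12345_comp_eq_comp hφ (fun q => hψu _) (hψφ 0) (hψu _) hγ
  obtain ⟨m, hm, hmφ⟩ := exists_mem_S12345_comp_eq hφ
    ((infinite_range_of_injective (hψ.comp Sum.inr_injective)).mono (range_subset_iff.mpr hψφ))
    hvs.injective (hcv.trans (collapse_le_defect_of_leftInverse hvs))
  have hf : f = v * m * u * a := funext fun w => by
    change f w = v (m (u (a w)))
    rw [hua, hmφ, hvs]
  have hgen : S12345 ∪ {u, v} ⊆ Subsemigroup.closure (S12345 ∪ {u, v}) :=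
    Subsemigroup.subset_closure
  rw [hf]
  exact mul_mem (mul_mem (mul_mem (hgen (by simp)) (hgen (.inl hm))) (hgen (by simp)))
    (hgen (.inl ha))

theorem stmt13 (Ω : Type) [Countable Ω] [Infinite Ω] (u v f : Function.End Ω)
    (hku : ℵ₀ ≤ contract u) (hkf : ℵ₀ ≤ contract f)
    (hcv : ℵ₀ ≤ collapse v) (hdv : defect v = 0) :
    f ∈ Subsemigroup.closure (S12345 ∪ {u, v}) :=
  stmt13_general Ω u v f hku hkf hcv hdv
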